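/- Let A be a pure nBA (type q, e₁,...,eₙ only). The map f : A → n[B_A] sending a to the formal sum Σᵢ aᵢ eᵢ of its coordinates is an isomorphism from A onto the nBA of n-central elements of the free Boolean vector space B_Aⁿ over the Boolean algebra B_A of coordinates of A. -/

import Mathlib

/-- A pure Boolean-like algebra of dimension `n`: a type with constants `e₁,…,eₙ` and an
`(n+1)`-ary operation `q` satisfying `q(eᵢ,x̄) = xᵢ`, in which every element `c` is
`n`-central: (B1) `q(c,e₁,…,eₙ) = c`, (B2) `q(c,x,…,x) = x`, and (B3) `q(c,−)` commutes
with `q` itself. -/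
structure PNBA (n : ℕ) where
  A : Type
  e : Fin n → A
  q : A → (Fin n → A) → A
  q_e : ∀ (i : Fin n) (x : Fin n → A), q (e i) x = x i
  B1 : ∀ c : A, q c e = c
  B2 : ∀ (c x : A), q c (fun _ => x) = x
  B3q : ∀ (c : A) (a : Fin n → A) (m : Fin n → Fin n → A),
      q c (fun i => q (a i) (m i)) = q (q c a) (fun j => q c (fun i => m i j))

/-- The ternary operation `p(x,y,z) = q(x,y,z,e₃,…,eₙ)`. -/
def PNBA.p {n : ℕ} (B : PNBA (n + 2)) (x y z : B.A) : B.A :=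
  B.q x (fun i => if i = 0 then y else if i = 1 then z else B.e i)

/-- Membership in `B_A`, the Boolean algebra of `2`-central elements of the `nBA`:
`x ∈ B_A` iff `p(x,y,y) = y` for all `y`. -/
def PNBA.inBA {n : ℕ} (B : PNBA (n + 2)) (x : B.A) : Prop :=
  ∀ y : B.A, B.p x y y = y

/-- The `i`-th coordinate of an element `a`:
`aᵢ = q(a, e₁,…,e₁, e₂, e₁,…,e₁)` with `e₂` in position `i`. -/
def PNBA.coord {n : ℕ} (B : PNBA (n + 2)) (a : B.A) (i : Fin (n + 2)) : B.A :=
  B.q a (fun k => if k = i then B.e 1 else B.e 0)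

/-- Join in the Boolean algebra `B_A`: `x ∨ y = p(x, y, e₂)`. -/
def PNBA.join {n : ℕ} (B : PNBA (n + 2)) (x y : B.A) : B.A := B.p x y (B.e 1)

/-- Meet in the Boolean algebra `B_A`: `x ∧ y = p(x, e₁, y)`. -/
def PNBA.meet {n : ℕ} (B : PNBA (n + 2)) (x y : B.A) : B.A := B.p x (B.e 0) y

/-- Finite join `⋁` in `B_A` of a list, with the bottom `e₁` as unit. -/
def PNBA.bigJoin {n : ℕ} (B : PNBA (n + 2)) (l : List B.A) : B.A :=
  l.foldr B.join (B.e 0)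

/-- The `n`-central elements of the free Boolean vector space `B_Aⁿ` over `B_A`
(with basis `e₁,…,eₙ`) are exactly the vectors with fully orthogonal coordinates:
all coordinates lie in `B_A`, their join is `1` and they are pairwise disjoint. -/
def PNBA.CentralVec {n : ℕ} (B : PNBA (n + 2)) (v : Fin (n + 2) → B.A) : Prop :=
  (∀ i, B.inBA (v i)) ∧
  B.bigJoin (List.ofFn v) = B.e 1 ∧
  (∀ i j : Fin (n + 2), i ≠ j → B.meet (v i) (v j) = B.e 0)

/-- The `q` operation of the `nBA` `n[B_A]` of `n`-central elements of `B_Aⁿ`: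
`q(v, w¹,…,wⁿ)ᵢ = ⋁ⱼ (vⱼ ∧ wʲᵢ)`. -/
def PNBA.qVec {n : ℕ} (B : PNBA (n + 2)) (v : Fin (n + 2) → B.A)
    (w : Fin (n + 2) → Fin (n + 2) → B.A) : Fin (n + 2) → B.A :=
  fun i => B.bigJoin (List.ofFn (fun j => B.meet (v j) (w j i)))

/-!
For every `a`, the map `q(a, -)` commutes with `q(c, -)` for any `c` (axiom B3 with constant
`a`), and its diagonal collapses: `q(a, (q(a, mₖ))ₖ) = q(a, (mₖₖ)ₖ)`. Hence `q(a, -)` turns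
pointwise computations into computations in `A`, and the coordinate `aᵢ` acts as the indicator
of "`a` is `eᵢ`": `p(aᵢ, q(a, y), q(a, z)) = q(a, k ↦ if k = i then zₖ else yₖ)`. This gives at
once that the coordinates are orthogonal `2`-central elements, that `⋁ᵢ aᵢ ∧ uᵢ = q(a, u)`
(so `coord` preserves `q`), and that `a = Σᵢ aᵢ eᵢ`, the sum being iterated `p`. Conversely,
for an orthogonal vector `v` the sum `Σᵢ vᵢ eᵢ` has coordinate vector `v`.
-/

namespace PNBA

variable {n : ℕ} (B : PNBA (n + 2))

def pArgs (y z : B.A) : Fin (n + 2) → B.A :=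
  fun i => if i = 0 then y else if i = 1 then z else B.e i

lemma p_eq_q (x y z : B.A) : B.p x y z = B.q x (B.pArgs y z) := rfl

@[simp] lemma pArgs_zero (y z : B.A) : B.pArgs y z 0 = y := if_pos rfl

@[simp] lemma pArgs_one (y z : B.A) : B.pArgs y z 1 = z := by simp [pArgs]

lemma pArgs_of_ne {k : Fin (n + 2)} (h0 : k ≠ 0) (h1 : k ≠ 1) (y z : B.A) :
    B.pArgs y z k = B.e k := by
  simp [pArgs, h0, h1]

lemma pArgs_e_zero_e_one : B.pArgs (B.e 0) (B.e 1) = B.e := by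
  funext k
  by_cases h0 : k = 0
  · subst h0; simp
  by_cases h1 : k = 1
  · subst h1; simp
  exact B.pArgs_of_ne h0 h1 _ _

lemma pArgs_diag (y z : Fin (n + 2) → B.A) :
    (fun k => B.pArgs (y k) (z k) k) = B.pArgs (y 0) (z 1) := by
  funext k
  by_cases h0 : k = 0
  · subst h0; simp
  by_cases h1 : k = 1
  · subst h1; simp
  simp only [B.pArgs_of_ne h0 h1]

lemma pArgs_q (c : B.A) (y z : Fin (n + 2) → B.A) :
    B.pArgs (B.q c y) (B.q c z) = fun k => B.q c (fun j => B.pArgs (y j) (z j) k) := by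
  funext k
  by_cases h0 : k = 0
  · subst h0; simp
  by_cases h1 : k = 1
  · subst h1; simp
  simp only [B.pArgs_of_ne h0 h1, B.B2]

lemma q_q (c : B.A) (a b : Fin (n + 2) → B.A) :
    B.q (B.q c a) b = B.q c (fun i => B.q (a i) b) := by
  simpa only [B.B2] using (B.B3q c a (fun _ => b)).symm

lemma q_comm (x c : B.A) (m : Fin (n + 2) → Fin (n + 2) → B.A) :
    B.q x (fun k => B.q c (m k)) = B.q c (fun j => B.q x (fun k => m k j)) := by
  simpa only [B.B2] using B.B3q x (fun _ => c) m

lemma q_diag (c : B.A) (m : Fin (n + 2) → Fin (n + 2) → B.A) :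
    B.q c (fun k => B.q c (m k)) = B.q c (fun k => m k k) := by
  simpa only [B.q_e, B.B1] using (B.B3q c B.e (fun i j => m j i)).symm

@[simp] lemma p_e_zero (y z : B.A) : B.p (B.e 0) y z = y := by
  rw [p_eq_q, B.q_e, pArgs_zero]

@[simp] lemma p_e_one (y z : B.A) : B.p (B.e 1) y z = z := by
  rw [p_eq_q, B.q_e, pArgs_one]

lemma p_e_zero_e_one (x : B.A) : B.p x (B.e 0) (B.e 1) = x := by
  rw [p_eq_q, pArgs_e_zero_e_one, B.B1]

lemma p_p (x y z s t : B.A) : B.p (B.p x y z) s t = B.p x (B.p y s t) (B.p z s t) := by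
  rw [B.p_eq_q _ s t, B.p_eq_q x y z, q_q, B.p_eq_q x]
  congr 1
  funext k
  by_cases h0 : k = 0
  · subst h0; simp [p_eq_q]
  by_cases h1 : k = 1
  · subst h1; simp [p_eq_q]
  simp only [B.pArgs_of_ne h0 h1, B.q_e]

lemma p_q_comm (x c : B.A) (y z : Fin (n + 2) → B.A) :
    B.p x (B.q c y) (B.q c z) = B.q c (fun j => B.p x (y j) (z j)) := by
  rw [p_eq_q, pArgs_q, q_comm]
  rfl

lemma p_q_q_self (x : B.A) (y z : Fin (n + 2) → B.A) :
    B.p x (B.q x y) (B.q x z) = B.p x (y 0) (z 1) := by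
  rw [p_eq_q, pArgs_q, q_diag, pArgs_diag, p_eq_q]

lemma p_q_left (x : B.A) (y : Fin (n + 2) → B.A) (z : B.A) :
    B.p x (B.q x y) z = B.p x (y 0) z := by
  simpa only [B.B2] using B.p_q_q_self x y (fun _ => z)

lemma p_q_right (x y : B.A) (z : Fin (n + 2) → B.A) :
    B.p x y (B.q x z) = B.p x y (z 1) := by
  simpa only [B.B2] using B.p_q_q_self x (fun _ => y) z

lemma p_q_q_q (a : B.A) (x y z : Fin (n + 2) → B.A) :
    B.p (B.q a x) (B.q a y) (B.q a z) = B.q a (fun k => B.p (x k) (y k) (z k)) :=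
  calc B.p (B.q a x) (B.q a y) (B.q a z)
      = B.q a (fun k => B.p (x k) (B.q a y) (B.q a z)) := B.q_q a x _
    _ = B.q a (fun k => B.q a (fun j => B.p (x k) (y j) (z j))) := by simp only [B.p_q_comm]
    _ = B.q a (fun k => B.p (x k) (y k) (z k)) := B.q_diag a _

lemma q_eq_p_of_inBA {x : B.A} (hx : B.inBA x) (w : Fin (n + 2) → B.A) :
    B.q x w = B.p x (w 0) (w 1) := by
  rw [← B.p_q_q_self, hx]

lemma p_e_zero_of_meet_eq {x t : B.A} (hx : B.inBA x) (h : B.meet x t = B.e 0) :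
    B.p x t (B.e 0) = t := by
  have ht : B.p x t (B.meet x t) = t := by
    rw [meet, B.p_eq_q x (B.e 0) t, p_q_right, pArgs_one]
    exact hx t
  rwa [h] at ht

lemma join_self (x : B.A) : B.join x x = x :=
  calc B.p x x (B.e 1) = B.p x (B.q x B.e) (B.e 1) := by rw [B.B1]
    _ = x := by rw [p_q_left, p_e_zero_e_one]

lemma join_e_zero (x : B.A) : B.join x (B.e 0) = x := B.p_e_zero_e_one x

lemma e_zero_join (y : B.A) : B.join (B.e 0) y = y := B.p_e_zero y _

lemma join_q_q (a : B.A) (x y : Fin (n + 2) → B.A) :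
    B.join (B.q a x) (B.q a y) = B.q a (fun k => B.join (x k) (y k)) := by
  have h := B.p_q_q_q a x y (fun _ => B.e 1)
  rwa [B.B2] at h

lemma meet_e_one (x : B.A) : B.meet x (B.e 1) = x := B.p_e_zero_e_one x

lemma e_one_meet (y : B.A) : B.meet (B.e 1) y = y := B.p_e_one _ y

lemma e_zero_meet (y : B.A) : B.meet (B.e 0) y = B.e 0 := B.p_e_zero _ y

lemma meet_q (s x : B.A) (w : Fin (n + 2) → B.A) :
    B.meet s (B.q x w) = B.q x (fun k => B.meet s (w k)) := by
  have h := B.p_q_comm s x (fun _ => B.e 0) w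
  rwa [B.B2] at h

lemma join_meet (x s y : B.A) : B.meet (B.join x s) y = B.p x (B.meet s y) y := by
  rw [meet, join, p_p, p_e_one]
  rfl

@[simp] lemma bigJoin_nil : B.bigJoin [] = B.e 0 := rfl

@[simp] lemma bigJoin_cons (x : B.A) (l : List B.A) :
    B.bigJoin (x :: l) = B.join x (B.bigJoin l) := rfl

lemma coord_q (a : B.A) (w : Fin (n + 2) → B.A) (j : Fin (n + 2)) :
    B.coord (B.q a w) j = B.q a (fun k => B.coord (w k) j) :=
  B.q_q a w _

lemma coord_e (i j : Fin (n + 2)) :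
    B.coord (B.e i) j = if i = j then B.e 1 else B.e 0 :=
  B.q_e i _

lemma coord_p {x : B.A} (hx : B.inBA x) (y z : B.A) (j : Fin (n + 2)) :
    B.coord (B.p x y z) j = B.p x (B.coord y j) (B.coord z j) := by
  rw [coord, p_eq_q, q_q, B.q_eq_p_of_inBA hx, pArgs_zero, pArgs_one]
  rfl

lemma p_coord_q (a : B.A) (i : Fin (n + 2)) (y z : Fin (n + 2) → B.A) :
    B.p (B.coord a i) (B.q a y) (B.q a z) = B.q a (fun k => if k = i then z k else y k) := by
  refine (B.p_q_q_q a _ y z).trans (congrArg _ (funext fun k => ?_))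
  split_ifs <;> simp

lemma p_coord (a : B.A) (i : Fin (n + 2)) (y z : B.A) :
    B.p (B.coord a i) y z = B.q a (fun k => if k = i then z else y) := by
  simpa only [B.B2] using B.p_coord_q a i (fun _ => y) (fun _ => z)

lemma inBA_coord (a : B.A) (i : Fin (n + 2)) : B.inBA (B.coord a i) := by
  intro y
  rw [p_coord]
  simp only [ite_self, B.B2]

lemma meet_coord_coord {i j : Fin (n + 2)} (hij : i ≠ j) (a : B.A) :
    B.meet (B.coord a i) (B.coord a j) = B.e 0 := by
  have h := B.p_coord_q a i (fun _ => B.e 0) (fun k => if k = j then B.e 1 else B.e 0)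
  rw [B.B2] at h
  refine h.trans ?_
  conv_rhs => rw [← B.B2 a (B.e 0)]
  congr 1
  funext k
  by_cases hk : k = i <;> simp [hk, hij]

lemma bigJoin_map_meet_coord (a : B.A) (u : Fin (n + 2) → B.A) (l : List (Fin (n + 2))) :
    B.bigJoin (l.map fun k => B.meet (B.coord a k) (u k))
      = B.q a (fun k => if k ∈ l then u k else B.e 0) := by
  induction l with
  | nil => simpa using (B.B2 a (B.e 0)).symm
  | cons i l ih =>
    rw [List.map_cons, bigJoin_cons, ih, meet, p_coord, join_q_q]
    congr 1
    funext k
    by_cases hk : k = i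
    · subst hk
      by_cases hl : k ∈ l <;> simp [hl, join_self, join_e_zero]
    · simp [hk, e_zero_join]

lemma bigJoin_ofFn_meet_coord (a : B.A) (u : Fin (n + 2) → B.A) :
    B.bigJoin (List.ofFn fun k => B.meet (B.coord a k) (u k)) = B.q a u := by
  rw [List.ofFn_eq_map, bigJoin_map_meet_coord]
  simp [List.mem_finRange]

lemma centralVec_coord (a : B.A) : B.CentralVec (B.coord a) := by
  refine ⟨B.inBA_coord a, ?_, fun i j hij => B.meet_coord_coord hij a⟩
  calc B.bigJoin (List.ofFn (B.coord a))
      = B.bigJoin (List.ofFn fun k => B.meet (B.coord a k) (B.e 1)) := by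
        simp only [meet_e_one]
    _ = B.e 1 := by rw [bigJoin_ofFn_meet_coord, B.B2]

lemma coord_q_eq_qVec (a : B.A) (w : Fin (n + 2) → B.A) :
    B.coord (B.q a w) = B.qVec (B.coord a) (fun j => B.coord (w j)) := by
  funext j
  rw [coord_q]
  exact (B.bigJoin_ofFn_meet_coord a _).symm

/-- The formal sum `Σ_{i ∈ l} vᵢ eᵢ`: "if `vᵢ` then `eᵢ` else the rest". -/
def basisSum (v : Fin (n + 2) → B.A) (l : List (Fin (n + 2))) : B.A :=
  l.foldr (fun i b => B.p (v i) b (B.e i)) (B.e 0)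

lemma basisSum_coord (a : B.A) (l : List (Fin (n + 2))) :
    B.basisSum (B.coord a) l = B.q a (fun k => if k ∈ l then B.e k else B.e 0) := by
  induction l with
  | nil => simpa [basisSum] using (B.B2 a (B.e 0)).symm
  | cons i l ih =>
    have h := B.p_coord_q a i (fun k => if k ∈ l then B.e k else B.e 0) (fun _ => B.e i)
    rw [B.B2, ← ih] at h
    refine h.trans (congrArg _ (funext fun k => ?_))
    by_cases hk : k = i <;> simp [hk]

lemma coord_injective : Function.Injective B.coord := by
  have h (a : B.A) : B.basisSum (B.coord a) (List.finRange (n + 2)) = a := by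
    rw [basisSum_coord]
    simpa [List.mem_finRange] using B.B1 a
  intro a b hab
  rw [← h a, ← h b, hab]

lemma meet_bigJoin_coord_basisSum {v : Fin (n + 2) → B.A} (hv : ∀ i, B.inBA (v i))
    (horth : ∀ i j, i ≠ j → B.meet (v i) (v j) = B.e 0) (j : Fin (n + 2))
    (l : List (Fin (n + 2))) :
    B.meet (B.bigJoin (l.map v)) (B.coord (B.basisSum v l) j)
      = if j ∈ l then v j else B.e 0 := by
  induction l with
  | nil => simpa using B.e_zero_meet _
  | cons i l ih =>
    have hstep : B.coord (B.basisSum v (i :: l)) j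
        = B.p (v i) (B.coord (B.basisSum v l) j) (B.coord (B.e i) j) :=
      B.coord_p (hv i) _ _ _
    rw [List.map_cons, bigJoin_cons, hstep, join_meet, B.p_eq_q (v i) (B.coord (B.basisSum v l) j), meet_q, p_q_left,
      p_q_right, pArgs_zero, pArgs_one, ih, coord_e]
    by_cases hij : i = j
    · subst hij
      by_cases hl : i ∈ l
      · simpa [hl, join] using B.join_self (v i)
      · simpa [hl, join] using B.join_e_zero (v i)
    · have hji : j ≠ i := Ne.symm hij
      by_cases hl : j ∈ l
      · simpa [hij, hji, hl] using B.p_e_zero_of_meet_eq (hv i) (horth i j hij)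
      · simpa [hij, hji, hl] using hv i (B.e 0)

lemma coord_basisSum {v : Fin (n + 2) → B.A} (hv : B.CentralVec v) :
    B.coord (B.basisSum v (List.finRange (n + 2))) = v := by
  obtain ⟨hin, hjoin, horth⟩ := hv
  funext j
  have h := B.meet_bigJoin_coord_basisSum hin horth j (List.finRange (n + 2))
  rwa [← List.ofFn_eq_map, hjoin, e_one_meet, if_pos (List.mem_finRange j)] at h

end PNBA

/-- Representation theorem: the coordinate map `a ↦ (a₁,…,aₙ)` is an isomorphism from a
pure `nBA` `A` onto the `nBA` `n[B_A]` of `n`-central elements of the free Boolean vector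
space `B_Aⁿ`: it lands in the central vectors, is injective and surjective onto them, and
carries the operation `q` of `A` to the operation `q` of `n[B_A]` (and trivially the
constants `eᵢ` to their coordinate vectors). -/
theorem representation_nBA_central_vectors {n : ℕ} (B : PNBA (n + 2)) :
    (∀ a : B.A, B.CentralVec (B.coord a)) ∧
    (∀ a b : B.A, B.coord a = B.coord b → a = b) ∧
    (∀ v : Fin (n + 2) → B.A, B.CentralVec v → ∃ a : B.A, B.coord a = v) ∧
    (∀ (a : B.A) (w : Fin (n + 2) → B.A),
      B.coord (B.q a w) = B.qVec (B.coord a) (fun j => B.coord (w j))) :=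
  ⟨B.centralVec_coord, fun _ _ h => B.coord_injective h, fun _ hv => ⟨_, B.coord_basisSum hv⟩,
    B.coord_q_eq_qVec⟩
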